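/- arXiv:2105.14755 — 7 statements merged into one kernel-verified Lean document; each statement's English description precedes it below -/
import Mathlib

section
/- Let h > 0 be a real number, let Φ_n ∈ ℂ^{N_g × N} satisfy Φ_n† Φ_n = I_N, and let Φ_{n+1} ∈ ℂ^{N_g × N}. Set Φ_{n+1/2} := (Φ_n + Φ_{n+1})/2, assume M := Φ_{n+1/2}† Φ_{n+1/2} is invertible, and set P_{n+1/2} := Φ_{n+1/2} M^{-1} Φ_{n+1/2}†. If Φ_{n+1} satisfies the parallel transport–implicit midpoint update i (Φ_{n+1} − Φ_n)/h = (I − P_{n+1/2}) H Φ_{n+1/2} for some matrix H ∈ ℂ^{N_g × N_g}, then Φ_{n+1}† Φ_{n+1} = I_N. -/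
open Matrix

/-- **Orthogonality preservation of the PT-IM update.**
If `Φₙᴴ Φₙ = I`, `Φ_{n+1/2} = (Φₙ + Φ_{n+1})/2`, `M = Φ_{n+1/2}ᴴ Φ_{n+1/2}` is invertible,
`P_{n+1/2} = Φ_{n+1/2} M⁻¹ Φ_{n+1/2}ᴴ`, and the parallel transport–implicit midpoint update
`i (Φ_{n+1} − Φₙ)/h = (I − P_{n+1/2}) H Φ_{n+1/2}` holds, then `Φ_{n+1}ᴴ Φ_{n+1} = I`. -/
theorem ptim_preserves_orthogonality
    (Ng N : ℕ) (h : ℝ) (hh : 0 < h)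
    (Φn Φn1 : Matrix (Fin Ng) (Fin N) ℂ)
    (H : Matrix (Fin Ng) (Fin Ng) ℂ)
    (hΦn : Φnᴴ * Φn = 1)
    (Φhalf : Matrix (Fin Ng) (Fin N) ℂ)
    (hΦhalf : Φhalf = (1 / 2 : ℂ) • (Φn + Φn1))
    (M : Matrix (Fin N) (Fin N) ℂ)
    (hM : M = Φhalfᴴ * Φhalf)
    (hMinv : IsUnit M)
    (Phalf : Matrix (Fin Ng) (Fin Ng) ℂ)
    (hPhalf : Phalf = Φhalf * M⁻¹ * Φhalfᴴ)
    (hupdate : (Complex.I / (h : ℂ)) • (Φn1 - Φn) = (1 - Phalf) * H * Φhalf) :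
    Φn1ᴴ * Φn1 = 1 := by
  have hdet : IsUnit M.det := (Matrix.isUnit_iff_isUnit_det M).mp hMinv
  have hMM : M * M⁻¹ = 1 := Matrix.mul_nonsing_inv M hdet
  have hA : Φhalfᴴ * (1 - Phalf) = 0 := by
    rw [hPhalf, Matrix.mul_sub, Matrix.mul_one, ← Matrix.mul_assoc, ← Matrix.mul_assoc,
      ← hM, hMM, Matrix.one_mul, sub_self]
  have hkey : Φhalfᴴ * (Φn1 - Φn) = 0 := by
    have h1 : Φhalfᴴ * ((Complex.I / (h : ℂ)) • (Φn1 - Φn)) = 0 := by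
      rw [hupdate, ← Matrix.mul_assoc, ← Matrix.mul_assoc, hA, Matrix.zero_mul,
        Matrix.zero_mul]
    rw [Matrix.mul_smul] at h1
    have hc : (Complex.I / (h : ℂ)) ≠ 0 := by
      apply div_ne_zero Complex.I_ne_zero
      exact_mod_cast ne_of_gt hh
    exact (smul_eq_zero.mp h1).resolve_left hc
  have hkey2 : (Φn + Φn1)ᴴ * (Φn1 - Φn) = 0 := by
    rw [hΦhalf, conjTranspose_smul, Matrix.smul_mul] at hkey
    have hc : star (1 / 2 : ℂ) ≠ 0 := by
      simp [Complex.ext_iff]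
    exact (smul_eq_zero.mp hkey).resolve_left hc
  have h3 : Φnᴴ * Φn1 - 1 + (Φn1ᴴ * Φn1 - Φn1ᴴ * Φn) = 0 := by
    have := hkey2
    rw [conjTranspose_add, Matrix.add_mul, Matrix.mul_sub, Matrix.mul_sub, hΦn] at this
    exact this
  have hexp : Φn1ᴴ * Φn1 + Φnᴴ * Φn1 - Φn1ᴴ * Φn = 1 := by
    rw [← sub_eq_zero]
    calc Φn1ᴴ * Φn1 + Φnᴴ * Φn1 - Φn1ᴴ * Φn - 1
        = Φnᴴ * Φn1 - 1 + (Φn1ᴴ * Φn1 - Φn1ᴴ * Φn) := by abel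
      _ = 0 := h3
  have hexpT : Φn1ᴴ * Φn1 + Φn1ᴴ * Φn - Φnᴴ * Φn1 = 1 := by
    have := congrArg conjTranspose hexp
    simpa [conjTranspose_add, conjTranspose_sub, conjTranspose_mul,
      Matrix.conjTranspose_one, add_comm, add_left_comm, add_assoc] using this
  have hXX : (2 : ℂ) • (Φn1ᴴ * Φn1) = (2 : ℂ) • (1 : Matrix (Fin N) (Fin N) ℂ) := by
    rw [two_smul, two_smul]
    calc Φn1ᴴ * Φn1 + Φn1ᴴ * Φn1
        = (Φn1ᴴ * Φn1 + Φnᴴ * Φn1 - Φn1ᴴ * Φn) + (Φn1ᴴ * Φn1 + Φn1ᴴ * Φn - Φnᴴ * Φn1) := by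
          abel
      _ = 1 + 1 := by rw [hexp, hexpT]
  exact smul_right_injective (Matrix (Fin N) (Fin N) ℂ) (by norm_num : (2:ℂ) ≠ 0) hXX
end

section
/- Let h > 0 be a real number, let H̃ ∈ ℂ^{N × N} be Hermitian, and let σ_n ∈ ℂ^{N × N} be Hermitian. Suppose σ_{n+1} ∈ ℂ^{N × N} satisfies σ_{n+1} − σ_n = −(i h / 2) [H̃, σ_n + σ_{n+1}], and suppose the linear map X ↦ X + (i h / 2) [H̃, X] on ℂ^{N × N} is injective. Then σ_{n+1} is Hermitian, i.e. σ_{n+1}† = σ_{n+1}. -/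
open Matrix

section LieBracket

attribute [local instance] LieRing.ofAssociativeRing

theorem add_smul_lie_eq_sub_smul_lie_of_sub_eq {R A : Type*} [CommRing R] [Ring A] [Module R A]
    {H x y : A} {c : R} (hxy : y - x = -c • ⁅H, x + y⁆) :
    y + c • ⁅H, y⁆ = x - c • ⁅H, x⁆ := by
  rw [lie_add] at hxy
  linear_combination (norm := module) hxy

variable {R A : Type*} [CommRing R] [StarRing R] [Ring A] [StarRing A] [Module R A]
  [StarModule R A]

theorem star_lie (x y : A) : star ⁅x, y⁆ = ⁅star y, star x⁆ := by
  simp only [Ring.lie_def, star_sub, star_mul]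

theorem IsSelfAdjoint.star_add_smul_lie {H : A} (hH : IsSelfAdjoint H) {c : R}
    (hc : star c = -c) (X : A) :
    star (X + c • ⁅H, X⁆) = star X + c • ⁅H, star X⁆ := by
  rw [star_add, star_smul, star_lie, hH.star_eq, hc, neg_smul, ← smul_neg, ← lie_skew, neg_neg]

theorem IsSelfAdjoint.sub_smul_lie {H X : A} (hH : IsSelfAdjoint H) (hX : IsSelfAdjoint X)
    {c : R} (hc : star c = -c) : IsSelfAdjoint (X - c • ⁅H, X⁆) := by
  have hc' : star (-c) = -(-c) := by rw [star_neg, hc]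
  rw [sub_eq_add_neg, ← neg_smul, IsSelfAdjoint, hH.star_add_smul_lie hc' X, hX.star_eq]

/-- `star y` solves the same implicit midpoint step as `y`. -/
theorem IsSelfAdjoint.of_implicit_midpoint_step {H x y : A} (hH : IsSelfAdjoint H)
    (hx : IsSelfAdjoint x) {c : R} (hc : star c = -c) (hxy : y - x = -c • ⁅H, x + y⁆)
    (hinj : Function.Injective fun X : A => X + c • ⁅H, X⁆) : IsSelfAdjoint y := by
  apply hinj
  change star y + c • ⁅H, star y⁆ = y + c • ⁅H, y⁆
  rw [← hH.star_add_smul_lie hc, add_smul_lie_eq_sub_smul_lie_of_sub_eq hxy,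
    (hH.sub_smul_lie hx hc).star_eq]

end LieBracket

theorem Complex.star_I_mul_ofReal_div_two (h : ℝ) :
    star (Complex.I * (h : ℂ) / 2) = -(Complex.I * (h : ℂ) / 2) := by
  simp only [star_div₀, star_mul', RCLike.star_def, conj_I, conj_ofReal, neg_mul, star_ofNat]
  ring

theorem ptim_sigma_hermitian_general
    (N : ℕ) (h : ℝ)
    (Htil σn σn1 : Matrix (Fin N) (Fin N) ℂ)
    (hH : Htil.IsHermitian) (hσn : σn.IsHermitian)
    (hupdate : σn1 - σn = (-(Complex.I * (h : ℂ) / 2)) • ⁅Htil, σn + σn1⁆)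
    (hinj : Function.Injective
      (fun X : Matrix (Fin N) (Fin N) ℂ => X + (Complex.I * (h : ℂ) / 2) • ⁅Htil, X⁆)) :
    σn1.IsHermitian :=
  hH.isSelfAdjoint.of_implicit_midpoint_step hσn.isSelfAdjoint
    (Complex.star_I_mul_ofReal_div_two h) hupdate hinj

/-- **Hermiticity preservation of the implicit midpoint update of the occupation matrix.**
If `H̃` and `σₙ` are Hermitian, `σ_{n+1} − σₙ = −(i h / 2) [H̃, σₙ + σ_{n+1}]`, and the linear
map `X ↦ X + (i h / 2) [H̃, X]` is injective, then `σ_{n+1}` is Hermitian. -/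
theorem ptim_sigma_hermitian
    (N : ℕ) (h : ℝ) (hh : 0 < h)
    (Htil σn σn1 : Matrix (Fin N) (Fin N) ℂ)
    (hH : Htil.IsHermitian) (hσn : σn.IsHermitian)
    (hupdate : σn1 - σn = (-(Complex.I * (h : ℂ) / 2)) • ⁅Htil, σn + σn1⁆)
    (hinj : Function.Injective
      (fun X : Matrix (Fin N) (Fin N) ℂ => X + (Complex.I * (h : ℂ) / 2) • ⁅Htil, X⁆)) :
    σn1.IsHermitian :=
  ptim_sigma_hermitian_general N h Htil σn σn1 hH hσn hupdate hinj
end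

section
/- Let h be a real number and H̃, σ_n, σ_{n+1} ∈ ℂ^{N × N}. If σ_{n+1} − σ_n = −(i h / 2) [H̃, σ_n + σ_{n+1}], then Tr[σ_{n+1}²] = Tr[σ_n²]. -/
open Matrix

/-- **Preservation of the trace of the square of the occupation matrix under the implicit
midpoint update.** If `σ_{n+1} − σₙ = −(i h / 2) [H̃, σₙ + σ_{n+1}]`, then
`Tr[σ_{n+1}²] = Tr[σₙ²]`. -/
theorem ptim_sigma_trace_sq
    (N : ℕ) (h : ℝ)
    (Htil σn σn1 : Matrix (Fin N) (Fin N) ℂ)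
    (hupdate : σn1 - σn = (-(Complex.I * (h : ℂ) / 2)) • ⁅Htil, σn + σn1⁆) :
    (σn1 * σn1).trace = (σn * σn).trace := by
  set S := σn + σn1 with hS
  have key : (S * (σn1 - σn)).trace = (σn1 * σn1).trace - (σn * σn).trace := by
    simp only [hS, mul_sub, add_mul, trace_sub, trace_add, trace_mul_comm σn σn1]
    ring
  have zero : (S * ((-(Complex.I * (h : ℂ) / 2)) • ⁅Htil, S⁆)).trace = 0 := by
    rw [Matrix.mul_smul, trace_smul]
    have : (S * ⁅Htil, S⁆).trace = 0 := by
      simp only [Ring.lie_def, mul_sub, trace_sub, ← mul_assoc,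
        trace_mul_comm S Htil]
      rw [trace_mul_comm (S * Htil) S, ← mul_assoc, sub_self]
    rw [this, smul_zero]
  rw [hupdate] at key
  rw [zero] at key
  exact sub_eq_zero.mp key.symm
end

section
/- Let P, ρ : ℝ → ℂ^{N_g × N_g} be three times differentiable, H : ℝ → ℂ^{N_g × N_g} twice differentiable, and let H_t, H_tt : ℝ → ℂ^{N_g × N_g}, A, B : ℝ → L(ℂ^{N_g × N_g}, ℂ^{N_g × N_g}), and C : ℝ → Bil(ℂ^{N_g × N_g} × ℂ^{N_g × N_g}, ℂ^{N_g × N_g}) be given. Assume for all t: (i) i P' = [H, P]; (ii) i ρ' = [H, ρ]; (iii) H' = H_t + A(ρ'); (iv) H_t' = H_tt + B(ρ'); (v) the derivative of t ↦ A(t) as a map into linear operators satisfies A'(t)(X) = B(t)(X) + C(t)(ρ'(t), X) for all matrices X; (vi) P(t) is an orthogonal projection (P² = P, P† = P). Then in the operator norm, ‖P'''(t)‖ ≤ ‖[H_tt, P]‖ + 2‖B([H, ρ])‖ + ‖C([H, ρ], [H, ρ])‖ + ‖A([H_t, ρ])‖ + ‖A([A([H, ρ]), ρ])‖ + ‖A([H,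 [H, ρ]])‖ + 2‖[H_t, [H, P]]‖ + 2‖[A([H, ρ]), [H, P]]‖ + ‖[H, [H_t, P]]‖ + ‖[H, [A([H, ρ]), P]]‖ + ‖[H, [H, [H, P]]]‖, with all quantities evaluated at t. -/
open Matrix
open scoped Matrix.Norms.L2Operator

/-!
Writing the equations of motion as `P' = -i[H, P]` and `ρ' = -i[H, ρ]` shows that `P'` and `ρ'`
are again differentiable, and the product rule gives
`P''' = -i([H'', P] + 2[H', P'] + [H, P''])`. Substituting `H' = H_t - iA([H, ρ])` and the
chain rules for `H''` and `ρ''` turns every term into a sum of the brackets on the right-hand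
side, up to unimodular factors, so the triangle inequality bounds it. The one exception is
`[H'', P]`: there all of `H'' - H_tt` is estimated through `‖[X, P]‖ ≤ ‖X‖`, which holds because
`2P - 1` is unitary and `2[X, P] = [X, 2P - 1]`.
-/

open Complex

theorem IsStarProjection.norm_lie_le {E : Type*} [NormedRing E] [StarRing E] [CStarRing E]
    [NormedSpace ℝ E] {p : E} (hp : IsStarProjection p) (x : E) : ‖⁅x, p⁆‖ ≤ ‖x‖ := by
  have hu := hp.two_mul_sub_one_mem_unitary
  have hbracket : (2 : ℝ) • ⁅x, p⁆ = x * (2 * p - 1) - (2 * p - 1) * x := by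
    rw [Ring.lie_def, two_smul]
    noncomm_ring
  have : 2 * ‖⁅x, p⁆‖ ≤ 2 * ‖x‖ := calc
    2 * ‖⁅x, p⁆‖ = ‖x * (2 * p - 1) - (2 * p - 1) * x‖ := by
      rw [← hbracket, norm_smul, Real.norm_two]
    _ ≤ ‖x * (2 * p - 1)‖ + ‖(2 * p - 1) * x‖ := norm_sub_le _ _
    _ = 2 * ‖x‖ := by
      rw [CStarRing.norm_mul_mem_unitary _ hu, CStarRing.norm_mem_unitary_mul _ hu]
      ring
  linarith

theorem HasDerivAt.lie {𝕜 𝔸 : Type*} [NontriviallyNormedField 𝕜] [NormedRing 𝔸]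
    [NormedAlgebra 𝕜 𝔸] {f g : 𝕜 → 𝔸} {f' g' : 𝔸} {t : 𝕜}
    (hf : HasDerivAt f f' t) (hg : HasDerivAt g g' t) :
    HasDerivAt (fun s => ⁅f s, g s⁆) (⁅f', g t⁆ + ⁅f t, g'⁆) t := by
  simp only [Ring.lie_def]
  exact ((hf.mul hg).sub (hg.mul hf)).congr_deriv (by noncomm_ring)

theorem HasDerivAt.linearMap_apply {𝕜 E F : Type*} [NontriviallyNormedField 𝕜]
    [CompleteSpace 𝕜] [NormedAddCommGroup E] [NormedSpace 𝕜 E] [FiniteDimensional 𝕜 E]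
    [NormedAddCommGroup F] [NormedSpace 𝕜 F]
    {A : 𝕜 → E →ₗ[𝕜] F} {A' : E →ₗ[𝕜] F} {v : 𝕜 → E} {v' : E} {t : 𝕜}
    (hA : ∀ x, HasDerivAt (fun s => A s x) (A' x) t) (hv : HasDerivAt v v' t) :
    HasDerivAt (fun s => A s (v s)) (A' (v t) + A t v') t := by
  let b := Module.finBasis 𝕜 E
  let c : E →L[𝕜] (Fin (Module.finrank 𝕜 E) → 𝕜) :=
    LinearMap.toContinuousLinearMap b.equivFun.toLinearMap
  have hc : ∀ i, HasDerivAt (fun s => b.repr (v s) i) (b.repr v' i) t := fun i =>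
    hasDerivAt_pi.1 (c.hasFDerivAt.comp_hasDerivAt t hv) i
  have hrepr : ∀ (w : E) (L : E →ₗ[𝕜] F), ∑ i, b.repr w i • L (b i) = L w := fun w L => by
    simp_rw [← map_smul, ← map_sum, b.sum_repr]
  have hsum : HasDerivAt (fun s => ∑ i, b.repr (v s) i • A s (b i))
      (∑ i, (b.repr (v t) i • A' (b i) + b.repr v' i • A t (b i))) t :=
    HasDerivAt.fun_sum fun i _ => (hc i).smul (hA (b i))
  simpa only [Finset.sum_add_distrib, hrepr] using hsum

section VonNeumannEquation

variable {𝔸 : Type*} [NormedRing 𝔸] [NormedAlgebra ℂ 𝔸] {H X : ℝ → 𝔸}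

theorem deriv_eq_neg_I_smul_lie (hX : ∀ s, I • deriv X s = ⁅H s, X s⁆) (s : ℝ) :
    deriv X s = -I • ⁅H s, X s⁆ := by
  rw [← hX, smul_smul, neg_mul, I_mul_I, neg_neg, one_smul]

theorem hasDerivAt_deriv_of_I_smul_deriv_eq (hX : ∀ s, I • deriv X s = ⁅H s, X s⁆) {t : ℝ}
    (hHt : DifferentiableAt ℝ H t) (hXt : DifferentiableAt ℝ X t) :
    HasDerivAt (deriv X) (-I • (⁅deriv H t, X t⁆ + ⁅H t, deriv X t⁆)) t :=
  ((hHt.hasDerivAt.lie hXt.hasDerivAt).const_smul (-I)).congr_of_eventuallyEq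
    (.of_forall (deriv_eq_neg_I_smul_lie hX))

theorem hasDerivAt_deriv_deriv_of_I_smul_deriv_eq (hX : ∀ s, I • deriv X s = ⁅H s, X s⁆)
    (hH : Differentiable ℝ H) (hXd : Differentiable ℝ X) {t : ℝ} {H₂ : 𝔸}
    (hH₂ : HasDerivAt (deriv H) H₂ t) :
    HasDerivAt (deriv (deriv X)) (-I • ((⁅H₂, X t⁆ + ⁅deriv H t, deriv X t⁆)
      + (⁅deriv H t, deriv X t⁆ + ⁅H t, deriv (deriv X) t⁆))) t := by
  have hX₂ := fun s => hasDerivAt_deriv_of_I_smul_deriv_eq hX (hH s) (hXd s)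
  have h := ((hH₂.lie (hXd t).hasDerivAt).add ((hH t).hasDerivAt.lie (hX₂ t))).const_smul (-I)
  rw [← (hX₂ t).deriv] at h
  exact h.congr_of_eventuallyEq (.of_forall fun s => (hX₂ s).deriv)

end VonNeumannEquation

section Estimates

attribute [local instance] LieRing.ofAssociativeRing

variable {𝔸 : Type*} [NormedRing 𝔸] [NormedAlgebra ℂ 𝔸]
  (A B : 𝔸 →ₗ[ℂ] 𝔸) (C : 𝔸 →ₗ[ℂ] 𝔸 →ₗ[ℂ] 𝔸) {P ρ H Ht Htt H₁ ρ₁ ρ₂ P₁ P₂ : 𝔸}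

theorem norm_secondDeriv_hamiltonian_sub_le (hρ₁ : ρ₁ = -I • ⁅H, ρ⁆) (hH₁ : H₁ = Ht + A ρ₁)
    (hρ₂ : ρ₂ = -I • (⁅H₁, ρ⁆ + ⁅H, ρ₁⁆)) :
    ‖B ρ₁ + (B ρ₁ + C ρ₁ ρ₁ + A ρ₂)‖ ≤ 2 * ‖B ⁅H, ρ⁆‖ + ‖C ⁅H, ρ⁆ ⁅H, ρ⁆‖ + ‖A ⁅Ht, ρ⁆‖
      + ‖A ⁅A ⁅H, ρ⁆, ρ⁆‖ + ‖A ⁅H, ⁅H, ρ⁆⁆‖ := by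
  subst hρ₁ hH₁ hρ₂
  simp only [map_smul, map_add, LinearMap.smul_apply, add_lie, smul_lie, lie_smul]
  repeat (first | rw [norm_smul] | grw [norm_add_le])
  simp only [norm_neg, norm_I, one_mul]
  linarith

theorem norm_lie_deriv_deriv_le (hρ₁ : ρ₁ = -I • ⁅H, ρ⁆) (hH₁ : H₁ = Ht + A ρ₁)
    (hP₁ : P₁ = -I • ⁅H, P⁆) :
    ‖⁅H₁, P₁⁆‖ ≤ ‖⁅Ht, ⁅H, P⁆⁆‖ + ‖⁅A ⁅H, ρ⁆, ⁅H, P⁆⁆‖ := by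
  subst hρ₁ hH₁ hP₁
  simp only [map_smul, add_lie, smul_lie, lie_smul]
  repeat (first | rw [norm_smul] | grw [norm_add_le])
  simp only [norm_neg, norm_I, one_mul, le_refl]

theorem norm_lie_secondDeriv_projector_le (hρ₁ : ρ₁ = -I • ⁅H, ρ⁆) (hH₁ : H₁ = Ht + A ρ₁)
    (hP₁ : P₁ = -I • ⁅H, P⁆) (hP₂ : P₂ = -I • (⁅H₁, P⁆ + ⁅H, P₁⁆)) :
    ‖⁅H, P₂⁆‖ ≤ ‖⁅H, ⁅Ht, P⁆⁆‖ + ‖⁅H, ⁅A ⁅H, ρ⁆, P⁆⁆‖ + ‖⁅H, ⁅H, ⁅H, P⁆⁆⁆‖ := by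
  subst hρ₁ hH₁ hP₁ hP₂
  simp only [map_smul, add_lie, smul_lie, lie_smul, lie_add]
  repeat (first | rw [norm_smul] | grw [norm_add_le])
  simp only [norm_neg, norm_I, one_mul, le_refl]

theorem norm_thirdDeriv_projector_le [StarRing 𝔸] [CStarRing 𝔸] (hP : IsStarProjection P)
    (hρ₁ : ρ₁ = -I • ⁅H, ρ⁆) (hP₁ : P₁ = -I • ⁅H, P⁆) (hH₁ : H₁ = Ht + A ρ₁)
    (hρ₂ : ρ₂ = -I • (⁅H₁, ρ⁆ + ⁅H, ρ₁⁆)) (hP₂ : P₂ = -I • (⁅H₁, P⁆ + ⁅H, P₁⁆)) :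
    ‖-I • ((⁅Htt + B ρ₁ + (B ρ₁ + C ρ₁ ρ₁ + A ρ₂), P⁆ + ⁅H₁, P₁⁆)
        + (⁅H₁, P₁⁆ + ⁅H, P₂⁆))‖ ≤
      ‖⁅Htt, P⁆‖ + 2 * ‖B ⁅H, ρ⁆‖ + ‖C ⁅H, ρ⁆ ⁅H, ρ⁆‖ + ‖A ⁅Ht, ρ⁆‖ + ‖A ⁅A ⁅H, ρ⁆, ρ⁆‖
      + ‖A ⁅H, ⁅H, ρ⁆⁆‖ + 2 * ‖⁅Ht, ⁅H, P⁆⁆‖ + 2 * ‖⁅A ⁅H, ρ⁆, ⁅H, P⁆⁆‖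
      + ‖⁅H, ⁅Ht, P⁆⁆‖ + ‖⁅H, ⁅A ⁅H, ρ⁆, P⁆⁆‖ + ‖⁅H, ⁅H, ⁅H, P⁆⁆⁆‖ := by
  have hHtt : ‖⁅Htt + B ρ₁ + (B ρ₁ + C ρ₁ ρ₁ + A ρ₂), P⁆‖
      ≤ ‖⁅Htt, P⁆‖ + ‖B ρ₁ + (B ρ₁ + C ρ₁ ρ₁ + A ρ₂)‖ := by
    rw [add_assoc, add_lie]
    exact (norm_add_le _ _).trans (add_le_add_right (hP.norm_lie_le _) _)
  have h₂ := norm_secondDeriv_hamiltonian_sub_le A B C hρ₁ hH₁ hρ₂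
  have h₁ := norm_lie_deriv_deriv_le A hρ₁ hH₁ hP₁
  have h₃ := norm_lie_secondDeriv_projector_le A hρ₁ hH₁ hP₁ hP₂
  rw [norm_smul, norm_neg, norm_I, one_mul]
  grw [norm_add_le, norm_add_le, norm_add_le]
  linarith

end Estimates

theorem pt_third_derivative_projector_bound_general
    (Ng : ℕ)
    (P ρ H Ht Htt : ℝ → Matrix (Fin Ng) (Fin Ng) ℂ)
    (A B : ℝ → (Matrix (Fin Ng) (Fin Ng) ℂ →ₗ[ℂ] Matrix (Fin Ng) (Fin Ng) ℂ))
    (C : ℝ → (Matrix (Fin Ng) (Fin Ng) ℂ →ₗ[ℂ]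
          Matrix (Fin Ng) (Fin Ng) ℂ →ₗ[ℂ] Matrix (Fin Ng) (Fin Ng) ℂ))
    (hP : Differentiable ℝ P)
    (hρ : Differentiable ℝ ρ)
    (hH : Differentiable ℝ H)
    (hHt : Differentiable ℝ Ht)
    (heqP : ∀ t, Complex.I • deriv P t = ⁅H t, P t⁆)
    (heqρ : ∀ t, Complex.I • deriv ρ t = ⁅H t, ρ t⁆)
    (hchainH : ∀ t, deriv H t = Ht t + A t (deriv ρ t))
    (hchainHt : ∀ t, deriv Ht t = Htt t + B t (deriv ρ t))
    (hchainA : ∀ t X, HasDerivAt (fun s => A s X) (B t X + C t (deriv ρ t) X) t)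
    (hproj : ∀ t, P t * P t = P t ∧ (P t)ᴴ = P t) :
    ∀ t, ‖deriv (deriv (deriv P)) t‖ ≤
      ‖⁅Htt t, P t⁆‖
      + 2 * ‖B t ⁅H t, ρ t⁆‖
      + ‖C t ⁅H t, ρ t⁆ ⁅H t, ρ t⁆‖
      + ‖A t ⁅Ht t, ρ t⁆‖
      + ‖A t ⁅A t ⁅H t, ρ t⁆, ρ t⁆‖
      + ‖A t ⁅H t, ⁅H t, ρ t⁆⁆‖
      + 2 * ‖⁅Ht t, ⁅H t, P t⁆⁆‖
      + 2 * ‖⁅A t ⁅H t, ρ t⁆, ⁅H t, P t⁆⁆‖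
      + ‖⁅H t, ⁅Ht t, P t⁆⁆‖
      + ‖⁅H t, ⁅A t ⁅H t, ρ t⁆, P t⁆⁆‖
      + ‖⁅H t, ⁅H t, ⁅H t, P t⁆⁆⁆‖ := by
  intro t
  have hρ₂ := hasDerivAt_deriv_of_I_smul_deriv_eq heqρ (hH t) (hρ t)
  have hH₂ : HasDerivAt (deriv H) (Htt t + B t (deriv ρ t)
      + (B t (deriv ρ t) + C t (deriv ρ t) (deriv ρ t) + A t (deriv (deriv ρ) t))) t := by
    rw [funext hchainH, ← hchainHt]
    exact (hHt t).hasDerivAt.add <| HasDerivAt.linearMap_apply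
      (A := fun s => (A s).restrictScalars ℝ) (A' := (B t + C t (deriv ρ t)).restrictScalars ℝ)
      (hchainA t) hρ₂.differentiableAt.hasDerivAt
  rw [(hasDerivAt_deriv_deriv_of_I_smul_deriv_eq heqP hH hP hH₂).deriv]
  exact norm_thirdDeriv_projector_le (A t) (B t) (C t) ⟨(hproj t).1, (hproj t).2⟩
    (deriv_eq_neg_I_smul_lie heqρ t) (deriv_eq_neg_I_smul_lie heqP t) (hchainH t) hρ₂.deriv
    (hasDerivAt_deriv_of_I_smul_deriv_eq heqP (hH t) (hP t)).deriv

/-- **Commutator bound on the third derivative of the spectral projector** along the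
nonlinear von Neumann flow `i P' = [H, P]`, `i ρ' = [H, ρ]`, with the chain rules
`H' = H_t + A(ρ')`, `H_t' = H_tt + B(ρ')`, `A'(X) = B(X) + C(ρ', X)`, and `P(t)` an
orthogonal projection for each `t`. -/
theorem pt_third_derivative_projector_bound
    (Ng : ℕ)
    (P ρ H Ht Htt : ℝ → Matrix (Fin Ng) (Fin Ng) ℂ)
    (A B : ℝ → (Matrix (Fin Ng) (Fin Ng) ℂ →ₗ[ℂ] Matrix (Fin Ng) (Fin Ng) ℂ))
    (C : ℝ → (Matrix (Fin Ng) (Fin Ng) ℂ →ₗ[ℂ]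
          Matrix (Fin Ng) (Fin Ng) ℂ →ₗ[ℂ] Matrix (Fin Ng) (Fin Ng) ℂ))
    (hP : Differentiable ℝ P) (hP' : Differentiable ℝ (deriv P))
    (hP'' : Differentiable ℝ (deriv (deriv P)))
    (hρ : Differentiable ℝ ρ) (hρ' : Differentiable ℝ (deriv ρ))
    (hρ'' : Differentiable ℝ (deriv (deriv ρ)))
    (hH : Differentiable ℝ H) (hH' : Differentiable ℝ (deriv H))
    (hHt : Differentiable ℝ Ht)
    (heqP : ∀ t, Complex.I • deriv P t = ⁅H t, P t⁆)
    (heqρ : ∀ t, Complex.I • deriv ρ t = ⁅H t, ρ t⁆)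
    (hchainH : ∀ t, deriv H t = Ht t + A t (deriv ρ t))
    (hchainHt : ∀ t, deriv Ht t = Htt t + B t (deriv ρ t))
    (hchainA : ∀ t X, HasDerivAt (fun s => A s X) (B t X + C t (deriv ρ t) X) t)
    (hproj : ∀ t, P t * P t = P t ∧ (P t)ᴴ = P t) :
    ∀ t, ‖deriv (deriv (deriv P)) t‖ ≤
      ‖⁅Htt t, P t⁆‖
      + 2 * ‖B t ⁅H t, ρ t⁆‖
      + ‖C t ⁅H t, ρ t⁆ ⁅H t, ρ t⁆‖
      + ‖A t ⁅Ht t, ρ t⁆‖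
      + ‖A t ⁅A t ⁅H t, ρ t⁆, ρ t⁆‖
      + ‖A t ⁅H t, ⁅H t, ρ t⁆⁆‖
      + 2 * ‖⁅Ht t, ⁅H t, P t⁆⁆‖
      + 2 * ‖⁅A t ⁅H t, ρ t⁆, ⁅H t, P t⁆⁆‖
      + ‖⁅H t, ⁅Ht t, P t⁆⁆‖
      + ‖⁅H t, ⁅A t ⁅H t, ρ t⁆, P t⁆⁆‖
      + ‖⁅H t, ⁅H t, ⁅H t, P t⁆⁆⁆‖ :=
  pt_third_derivative_projector_bound_general Ng P ρ H Ht Htt A B C hP hρ hH hHt heqP heqρ hchainH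
    hchainHt hchainA hproj
end

section
/- Let Ψ : ℝ → ℂ^{N_g × N} and U : ℝ → ℂ^{N × N} be differentiable, and let H : ℝ → ℂ^{N_g × N_g}. Define Φ(t) = Ψ(t) U(t) and P(t) = Ψ(t) Ψ(t)†. Assume for all t: Ψ(t)† Ψ(t) = I_N, i Ψ'(t) = H(t) Ψ(t), and i Φ'(t) = (I − P(t)) H(t) Φ(t). Then the gauge matrix satisfies i U'(t) = −(Ψ(t)† H(t) Ψ(t)) U(t) for all t. -/
open Matrix
open scoped Matrix.Norms.L2Operator

/-! By the product rule, `i Φ' = (i Ψ') U + Ψ (i U') = H Ψ U + Ψ (i U')`. Comparing with the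
parallel transport equation gives `Ψ (i U') = -Ψ Ψᴴ H Ψ U`, and multiplying on the left by `Ψᴴ`,
which is a left inverse of `Ψ`, yields the claim. -/

section ProductRule

variable {l m n : Type*} [Fintype l] [Fintype m] [Fintype n]
  [DecidableEq m] [DecidableEq n]

theorem Matrix.isBoundedBilinearMap_mul :
    IsBoundedBilinearMap ℝ (fun p : Matrix l m ℂ × Matrix m n ℂ => p.1 * p.2) where
  add_left := Matrix.add_mul
  smul_left r A B := Matrix.smul_mul r A B
  add_right := Matrix.mul_add
  smul_right r A B := Matrix.mul_smul A r B
  bound := ⟨1, one_pos, fun A B => by simpa using l2_opNorm_mul A B⟩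

theorem HasDerivAt.matrix_mul {f : ℝ → Matrix l m ℂ} {g : ℝ → Matrix m n ℂ}
    {f' : Matrix l m ℂ} {g' : Matrix m n ℂ} {t : ℝ}
    (hf : HasDerivAt f f' t) (hg : HasDerivAt g g' t) :
    HasDerivAt (fun s => f s * g s) (f' * g t + f t * g') t := by
  have hfg : HasDerivAt (fun s => (f s, g s)) (f', g') t := hf.prodMk hg
  have := (Matrix.isBoundedBilinearMap_mul.hasFDerivAt (f t, g t)).comp_hasDerivAt t hfg
  simpa only [IsBoundedBilinearMap.deriv_apply, Function.comp_def, add_comm] using this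

end ProductRule

theorem smul_gauge_deriv_eq_of_parallel_transport {R : Type*} [CommRing R] {l m n : Type*}
    [Fintype l] [Fintype m] [DecidableEq l] [DecidableEq m] (c : R) {Ψ Ψ' : Matrix l m R} {V : Matrix m l R}
    {U U' : Matrix m n R} {H : Matrix l l R} (hV : V * Ψ = 1) (hΨ : c • Ψ' = H * Ψ)
    (hΦ : c • (Ψ' * U + Ψ * U') = (1 - Ψ * V) * H * (Ψ * U)) :
    c • U' = -(V * H * Ψ * U) := by
  have hΨU' : Ψ * (c • U') = Ψ * -(V * H * Ψ * U) := by
    rw [smul_add, ← Matrix.smul_mul, hΨ, ← Matrix.mul_smul] at hΦ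
    rw [eq_sub_of_add_eq' hΦ]
    simp only [Matrix.sub_mul, Matrix.one_mul, Matrix.mul_assoc, Matrix.mul_neg,
      sub_sub_cancel_left]
  calc c • U' = V * Ψ * (c • U') := by rw [hV, Matrix.one_mul]
    _ = -(V * H * Ψ * U) := by rw [Matrix.mul_assoc, hΨU', ← Matrix.mul_assoc, hV, Matrix.one_mul]

/-- **Evolution equation of the parallel transport gauge matrix.** If `Ψ` solves the
Schrödinger dynamics `i Ψ' = H Ψ` with orthonormal columns, and the gauge transform
`Φ = Ψ U` satisfies the parallel transport dynamics `i Φ' = (I − P) H Φ` with `P = Ψ Ψᴴ`,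
then `i U' = −(Ψᴴ H Ψ) U`. -/
theorem pt_gauge_matrix_evolution
    (Ng N : ℕ)
    (Ψ : ℝ → Matrix (Fin Ng) (Fin N) ℂ)
    (U : ℝ → Matrix (Fin N) (Fin N) ℂ)
    (H : ℝ → Matrix (Fin Ng) (Fin Ng) ℂ)
    (hΨ : Differentiable ℝ Ψ) (hU : Differentiable ℝ U)
    (horth : ∀ t, (Ψ t)ᴴ * Ψ t = 1)
    (heqΨ : ∀ t, Complex.I • deriv Ψ t = H t * Ψ t)
    (heqΦ : ∀ t, Complex.I • deriv (fun s => Ψ s * U s) t =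
      (1 - Ψ t * (Ψ t)ᴴ) * H t * (Ψ t * U t)) :
    ∀ t, Complex.I • deriv U t = -((Ψ t)ᴴ * H t * Ψ t * U t) := by
  intro t
  have hΦ := heqΦ t
  rw [((hΨ t).hasDerivAt.matrix_mul (hU t).hasDerivAt).deriv] at hΦ
  exact smul_gauge_deriv_eq_of_parallel_transport Complex.I (horth t) (heqΨ t) hΦ
end

section
/- Let Ψ : ℝ → ℂ^{N_g × N} and U : ℝ → ℂ^{N × N} be differentiable with U(t)† U(t) = I_N for all t, let H : ℝ → ℂ^{N_g × N_g}, and let σ_0 ∈ ℂ^{N × N}. Define Φ(t) = Ψ(t) U(t) and σ(t) = U(t)† σ_0 U(t). If i U'(t) = −(Ψ(t)† H(t) Ψ(t)) U(t) for all t, then σ is differentiable and satisfies i σ'(t) = [Φ(t)† H(t) Φ(t), σ(t)] for all t. -/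
/-!
Differentiating `Uᴴ U = 1` along `U' = i A U` gives `Uᴴ Aᴴ U = Uᴴ A U`, so the gauge Hamiltonian
`K = Uᴴ A U = Φᴴ H Φ` is Hermitian even though `A = Ψᴴ H Ψ` need not be. The product rule then gives
`i σ' = Uᴴ Aᴴ σ₀ U - Uᴴ σ₀ A U`, and inserting `U Uᴴ = 1` between the factors turns this into
`Kᴴ σ - σ K = [K, σ]`.
-/

open Matrix
open scoped Matrix.Norms.L2Operator

open Complex

theorem eq_I_smul_of_I_smul_eq_neg {M : Type*} [AddCommGroup M] [Module ℂ M] {x v : M}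
    (h : I • x = -v) : x = I • v :=
  calc x = -(I • I • x) := by rw [smul_smul, I_mul_I, neg_one_smul, neg_neg]
    _ = I • v := by rw [h, smul_neg, neg_neg]

theorem conj_mul_conj_of_mul_eq_one {M : Type*} [Monoid M] {u v : M} (h : u * v = 1)
    (x y : M) : (v * x * u) * (v * y * u) = v * (x * y) * u := by
  simp only [mul_assoc]
  rw [← mul_assoc u v, h, one_mul]

section

variable {n : Type*} [Fintype n] [DecidableEq n]

theorem HasDerivAt.conjTranspose_mul_mul {U : ℝ → Matrix n n ℂ} {U' : Matrix n n ℂ} {t : ℝ}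
    (hU : HasDerivAt U U' t) (S : Matrix n n ℂ) :
    HasDerivAt (fun s => (U s)ᴴ * S * U s) (U'ᴴ * S * U t + (U t)ᴴ * S * U') t :=
  (hU.star.mul_const S).mul hU

omit [DecidableEq n] in
theorem conjTranspose_I_smul_mul (A B : Matrix n n ℂ) :
    (I • (A * B))ᴴ = -I • (Bᴴ * Aᴴ) := by
  rw [conjTranspose_smul, conjTranspose_mul, star_def, conj_I]

variable {U : ℝ → Matrix n n ℂ} {A : Matrix n n ℂ} {t : ℝ}

theorem isHermitian_conjTranspose_mul_mul_of_hasDerivAt (hunit : ∀ s, (U s)ᴴ * U s = 1)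
    (hU : HasDerivAt U (I • (A * U t)) t) : ((U t)ᴴ * A * U t).IsHermitian := by
  have hderiv := hU.conjTranspose_mul_mul 1
  simp only [mul_one, hunit] at hderiv
  have hzero := hderiv.unique (hasDerivAt_const t 1)
  rw [conjTranspose_I_smul_mul, smul_mul_assoc, mul_smul_comm, neg_smul, ← smul_neg,
    ← smul_add, smul_eq_zero, neg_add_eq_zero] at hzero
  rw [IsHermitian, conjTranspose_mul, conjTranspose_mul, conjTranspose_conjTranspose, ← mul_assoc]
  simpa only [mul_assoc] using hzero.resolve_left I_ne_zero

theorem hasDerivAt_conjTranspose_mul_mul_eq_neg_I_smul_lie (hunit : ∀ s, (U s)ᴴ * U s = 1)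
    (hU : HasDerivAt U (I • (A * U t)) t) (S : Matrix n n ℂ) :
    HasDerivAt (fun s => (U s)ᴴ * S * U s)
      (-I • ⁅(U t)ᴴ * A * U t, (U t)ᴴ * S * U t⁆) t := by
  convert hU.conjTranspose_mul_mul S using 1
  have hright : U t * (U t)ᴴ = 1 := mul_eq_one_comm.mp (hunit t)
  have hK := (isHermitian_conjTranspose_mul_mul_of_hasDerivAt hunit hU).eq
  rw [conjTranspose_mul, conjTranspose_mul, conjTranspose_conjTranspose, ← mul_assoc] at hK
  rw [Ring.lie_def]
  nth_rw 1 [← hK]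
  rw [conj_mul_conj_of_mul_eq_one hright, conj_mul_conj_of_mul_eq_one hright,
    conjTranspose_I_smul_mul]
  simp only [smul_mul_assoc, mul_smul_comm, smul_sub, neg_smul, neg_mul, mul_assoc]
  abel

end

theorem pt_occupation_matrix_evolution_general
    (Ng N : ℕ)
    (Ψ : ℝ → Matrix (Fin Ng) (Fin N) ℂ)
    (U : ℝ → Matrix (Fin N) (Fin N) ℂ)
    (H : ℝ → Matrix (Fin Ng) (Fin Ng) ℂ)
    (σ0 : Matrix (Fin N) (Fin N) ℂ)
    (hU : Differentiable ℝ U)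
    (hunit : ∀ t, (U t)ᴴ * U t = 1)
    (heqU : ∀ t, Complex.I • deriv U t = -((Ψ t)ᴴ * H t * Ψ t * U t)) :
    Differentiable ℝ (fun t => (U t)ᴴ * σ0 * U t) ∧
    ∀ t, Complex.I • deriv (fun s => (U s)ᴴ * σ0 * U s) t =
      ⁅(Ψ t * U t)ᴴ * H t * (Ψ t * U t), (U t)ᴴ * σ0 * U t⁆ := by
  have hU' : ∀ t, HasDerivAt U (I • ((Ψ t)ᴴ * H t * Ψ t * U t)) t := fun t =>
    eq_I_smul_of_I_smul_eq_neg (heqU t) ▸ (hU t).hasDerivAt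
  have hσ := fun t => hasDerivAt_conjTranspose_mul_mul_eq_neg_I_smul_lie hunit (hU' t) σ0
  refine ⟨fun t => (hσ t).differentiableAt, fun t => ?_⟩
  have hΦ : (Ψ t * U t)ᴴ * H t * (Ψ t * U t) = (U t)ᴴ * ((Ψ t)ᴴ * H t * Ψ t) * U t := by
    simp only [conjTranspose_mul, Matrix.mul_assoc]
  rw [(hσ t).deriv, smul_smul, mul_neg, I_mul_I, neg_neg, one_smul, hΦ]

/-- **Evolution of the gauge-transformed occupation matrix.** If the unitary gauge matrix
`U` satisfies `i U' = −(Ψᴴ H Ψ) U`, then `σ = Uᴴ σ₀ U` is differentiable and satisfies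
`i σ' = [Φᴴ H Φ, σ]` where `Φ = Ψ U`. -/
theorem pt_occupation_matrix_evolution
    (Ng N : ℕ)
    (Ψ : ℝ → Matrix (Fin Ng) (Fin N) ℂ)
    (U : ℝ → Matrix (Fin N) (Fin N) ℂ)
    (H : ℝ → Matrix (Fin Ng) (Fin Ng) ℂ)
    (σ0 : Matrix (Fin N) (Fin N) ℂ)
    (hΨ : Differentiable ℝ Ψ) (hU : Differentiable ℝ U)
    (hunit : ∀ t, (U t)ᴴ * U t = 1)
    (heqU : ∀ t, Complex.I • deriv U t = -((Ψ t)ᴴ * H t * Ψ t * U t)) :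
    Differentiable ℝ (fun t => (U t)ᴴ * σ0 * U t) ∧
    ∀ t, Complex.I • deriv (fun s => (U s)ᴴ * σ0 * U s) t =
      ⁅(Ψ t * U t)ᴴ * H t * (Ψ t * U t), (U t)ᴴ * σ0 * U t⁆ :=
  pt_occupation_matrix_evolution_general Ng N Ψ U H σ0 hU hunit heqU
end

section
/- Let Φ : ℝ → ℂ^{N_g × N} and P : ℝ → ℂ^{N_g × N_g} be three times differentiable, and assume for all t: P(t) Φ(t) = Φ(t) and P(t) Φ'(t) = 0. Then for all t: Φ'(t) = P'(t) Φ(t); Φ''(t) = (P''(t) + P'(t)²) Φ(t); and Φ'''(t) = (P'''(t) + 2 P''(t) P'(t) + P'(t) P''(t) + P'(t)³) Φ(t). -/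
open Matrix
open scoped Matrix.Norms.L2Operator

/-!
Differentiating `P Φ = Φ` gives `P' Φ + P Φ' = Φ'`, and the parallel transport condition kills
`P Φ'`, so `Φ' = P' Φ`: the wavefunctions solve a linear ODE with generator `P'`. Along such a
solution, `(A Φ)' = (A' + A P') Φ` for every matrix function `A`; applying this to `A = P'` and then
to `A = P'' + P'²` gives the higher derivatives.
-/

section MatrixCalculus

-- Any norm would do here: the statements below only see the product topology on matrices.
open scoped Matrix.Norms.Elementwise

variable {𝕜 R : Type*} [NontriviallyNormedField 𝕜] [CompleteSpace 𝕜] [NormedRing R]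
  [NormedAlgebra 𝕜 R] [FiniteDimensional 𝕜 R] {l m n : Type*} [Fintype l] [Fintype m] [Fintype n]

theorem HasDerivAt.matrix_mul_s12 {A : 𝕜 → Matrix l m R} {B : 𝕜 → Matrix m n R}
    {A' : Matrix l m R} {B' : Matrix m n R} {t : 𝕜}
    (hA : HasDerivAt A A' t) (hB : HasDerivAt B B' t) :
    HasDerivAt (fun s => A s * B s) (A' * B t + A t * B') t := by
  rw [add_comm]
  exact (mulLinearMap 𝕜).toContinuousBilinearMap.hasDerivAt_of_bilinear (fun _ => hA) fun _ => hB

theorem deriv_matrix_mul {A : 𝕜 → Matrix l m R} {B : 𝕜 → Matrix m n R} {t : 𝕜}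
    (hA : DifferentiableAt 𝕜 A t) (hB : DifferentiableAt 𝕜 B t) :
    deriv (fun s => A s * B s) t = deriv A t * B t + A t * deriv B t :=
  (hA.hasDerivAt.matrix_mul_s12 hB.hasDerivAt).deriv

theorem deriv_eq_deriv_mul_of_mul_eq_self {P : 𝕜 → Matrix m m R} {Φ : 𝕜 → Matrix m n R} {t : 𝕜}
    (hP : DifferentiableAt 𝕜 P t) (hΦ : DifferentiableAt 𝕜 Φ t)
    (hrange : (fun s => P s * Φ s) =ᶠ[nhds t] Φ) (hpt : P t * deriv Φ t = 0) :
    deriv Φ t = deriv P t * Φ t :=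
  calc deriv Φ t = deriv (fun s => P s * Φ s) t := hrange.deriv_eq.symm
    _ = deriv P t * Φ t + P t * deriv Φ t := deriv_matrix_mul hP hΦ
    _ = deriv P t * Φ t := by rw [hpt, add_zero]

theorem deriv_mul_of_deriv_eq_mul {M : 𝕜 → Matrix m m R} {A : 𝕜 → Matrix l m R}
    {Φ : 𝕜 → Matrix m n R} {t : 𝕜} (hA : DifferentiableAt 𝕜 A t) (hΦ : DifferentiableAt 𝕜 Φ t)
    (hΦ' : deriv Φ t = M t * Φ t) :
    deriv (fun s => A s * Φ s) t = (deriv A t + A t * M t) * Φ t := by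
  rw [deriv_matrix_mul hA hΦ, hΦ', Matrix.add_mul, Matrix.mul_assoc]

end MatrixCalculus

theorem pt_wavefunction_derivatives_general
    (Ng N : ℕ)
    (Φ : ℝ → Matrix (Fin Ng) (Fin N) ℂ)
    (P : ℝ → Matrix (Fin Ng) (Fin Ng) ℂ)
    (hΦ : Differentiable ℝ Φ)
    (hP : Differentiable ℝ P) (hP' : Differentiable ℝ (deriv P))
    (hP'' : Differentiable ℝ (deriv (deriv P)))
    (hrange : ∀ t, P t * Φ t = Φ t)
    (hpt : ∀ t, P t * deriv Φ t = 0) :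
    ∀ t, deriv Φ t = deriv P t * Φ t ∧
      deriv (deriv Φ) t = (deriv (deriv P) t + deriv P t ^ 2) * Φ t ∧
      deriv (deriv (deriv Φ)) t =
        (deriv (deriv (deriv P)) t + 2 * (deriv (deriv P) t * deriv P t)
          + deriv P t * deriv (deriv P) t + deriv P t ^ 3) * Φ t := by
  have first (t : ℝ) : deriv Φ t = deriv P t * Φ t :=
    deriv_eq_deriv_mul_of_mul_eq_self (hP t) (hΦ t) (.of_forall hrange) (hpt t)
  have second (t : ℝ) : deriv (deriv Φ) t = (deriv (deriv P) t + deriv P t ^ 2) * Φ t := by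
    rw [funext first, deriv_mul_of_deriv_eq_mul (hP' t) (hΦ t) (first t), sq]
  intro t
  have hcoeff : HasDerivAt (fun s => deriv (deriv P) s + deriv P s ^ 2)
      (deriv (deriv (deriv P)) t + (deriv (deriv P) t * deriv P t
        + deriv P t * deriv (deriv P) t)) t := by
    simp only [sq]
    exact (hP'' t).hasDerivAt.add ((hP' t).hasDerivAt.matrix_mul_s12 (hP' t).hasDerivAt)
  refine ⟨first t, second t, ?_⟩
  rw [funext second, deriv_mul_of_deriv_eq_mul hcoeff.differentiableAt (hΦ t) (first t),
    hcoeff.deriv]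
  noncomm_ring

/-- **Derivatives of parallel-transported wavefunctions in terms of the projector.**
If `P Φ = Φ` and `P Φ' = 0` (the parallel transport condition), then
`Φ' = P' Φ`, `Φ'' = (P'' + (P')²) Φ`, and
`Φ''' = (P''' + 2 P'' P' + P' P'' + (P')³) Φ`. -/
theorem pt_wavefunction_derivatives
    (Ng N : ℕ)
    (Φ : ℝ → Matrix (Fin Ng) (Fin N) ℂ)
    (P : ℝ → Matrix (Fin Ng) (Fin Ng) ℂ)
    (hΦ : Differentiable ℝ Φ) (hΦ' : Differentiable ℝ (deriv Φ))
    (hΦ'' : Differentiable ℝ (deriv (deriv Φ)))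
    (hP : Differentiable ℝ P) (hP' : Differentiable ℝ (deriv P))
    (hP'' : Differentiable ℝ (deriv (deriv P)))
    (hrange : ∀ t, P t * Φ t = Φ t)
    (hpt : ∀ t, P t * deriv Φ t = 0) :
    ∀ t, deriv Φ t = deriv P t * Φ t ∧
      deriv (deriv Φ) t = (deriv (deriv P) t + deriv P t ^ 2) * Φ t ∧
      deriv (deriv (deriv Φ)) t =
        (deriv (deriv (deriv P)) t + 2 * (deriv (deriv P) t * deriv P t)
          + deriv P t * deriv (deriv P) t + deriv P t ^ 3) * Φ t :=
  pt_wavefunction_derivatives_general Ng N Φ P hΦ hP hP' hP'' hrange hpt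
end
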